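/- Let t ∈ [0,1), and let P̃ be an optimal solution of minimizing ⟨P̃, M'⟩ over the co-polytope Ũ_n(r̃,c̃). Suppose i ≠ k, j ≠ l, M'_{ij} > 0, M'_{il} < 0, M'_{kj} < 0, M'_{kl} < 0, and P̃_{ij} > 0. Then P̃_{kl}^{1-t} ≤ (|M'_{kl}|/(|M'_{ij}|+|M'_{il}|+|M'_{kj}|)) · max{P̃_{ij}, P̃_{il}, P̃_{kj}}^{1-t}. -/

import Mathlib

open Filter Topology

lemma sum_pair_of_eq_zero {α : Type*} [Fintype α] [DecidableEq α] {f : α → ℝ} {i k : α}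
    (hik : i ≠ k) (h : ∀ x, x ≠ i → x ≠ k → f x = 0) : ∑ x, f x = f i + f k := by
  rw [← Finset.sum_subset (Finset.subset_univ ({i, k} : Finset α))]
  · exact Finset.sum_pair hik
  · intro x _ hx
    simp only [Finset.mem_insert, Finset.mem_singleton, not_or] at hx
    exact h x hx.1 hx.2

lemma sum_two_ite {α : Type*} [Fintype α] [DecidableEq α] {j l : α} (hjl : j ≠ l) (u v : ℝ) :
    ∑ y, (if y = j then u else if y = l then v else 0) = u + v := by
  have h : ∀ y, (if y = j then u else if y = l then v else 0)
      = (if y = j then u else 0) + (if y = l then v else 0) := by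
    intro y
    by_cases h1 : y = j
    · subst h1; simp [hjl]
    · by_cases h2 : y = l
      · subst h2; simp [Ne.symm hjl, h1]
      · simp [h1, h2]
  simp only [h, Finset.sum_add_distrib, Finset.sum_ite_eq', Finset.mem_univ, if_true]

lemma rpow_lower {s : ℝ} (hs0 : 0 ≤ s) (hs1 : s ≤ 1) {x δ : ℝ} (hx : 0 < x)
    (hδ : 0 ≤ δ) (hδx : δ ≤ x) : δ * s * x ^ (s - 1) ≤ x ^ s - (x - δ) ^ s := by
  have hz : (-1 : ℝ) ≤ -(δ / x) := by
    rw [neg_le_neg_iff]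
    exact (div_le_one hx).2 hδx
  have key := rpow_one_add_le_one_add_mul_self hz hs0 hs1
  have hxe : x - δ = x * (1 + -(δ / x)) := by field_simp; ring
  have h1z : 0 ≤ 1 + -(δ / x) := by linarith
  have hmul : (x - δ) ^ s = x ^ s * (1 + -(δ / x)) ^ s := by
    rw [hxe, Real.mul_rpow hx.le h1z]
  have h2 : (x - δ) ^ s ≤ x ^ s * (1 + s * -(δ / x)) := by
    rw [hmul]
    exact mul_le_mul_of_nonneg_left key (Real.rpow_nonneg hx.le s)
  have h3 : x ^ s * (1 + s * -(δ / x)) = x ^ s - δ * s * x ^ (s - 1) := by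
    rw [Real.rpow_sub_one hx.ne' s]
    field_simp
    ring
  linarith [h2, h3.symm.le]

lemma rpow_upper {s : ℝ} (hs0 : 0 ≤ s) (hs1 : s ≤ 1) {y δ : ℝ} (hy : 0 < y)
    (hδ : 0 ≤ δ) : (y + δ) ^ s - y ^ s ≤ δ * s * y ^ (s - 1) := by
  have hz : (-1 : ℝ) ≤ δ / y := by have : 0 ≤ δ / y := div_nonneg hδ hy.le; linarith
  have key := rpow_one_add_le_one_add_mul_self hz hs0 hs1
  have hxe : y + δ = y * (1 + δ / y) := by field_simp
  have h1z : 0 ≤ 1 + δ / y := by linarith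
  have hmul : (y + δ) ^ s = y ^ s * (1 + δ / y) ^ s := by
    rw [hxe, Real.mul_rpow hy.le h1z]
  have h2 : (y + δ) ^ s ≤ y ^ s * (1 + s * (δ / y)) := by
    rw [hmul]
    exact mul_le_mul_of_nonneg_left key (Real.rpow_nonneg hy.le s)
  have h3 : y ^ s * (1 + s * (δ / y)) = y ^ s + δ * s * y ^ (s - 1) := by
    rw [Real.rpow_sub_one hy.ne' s]
    field_simp
  linarith [h2, h3.symm.le]

/-- The co-polytope `Ũ_n(r̃,c̃)` for parameter `t`. -/
def coPolytope {n : ℕ} (t : ℝ) (r c : Fin n → ℝ) (P : Fin n → Fin n → ℝ) : Prop :=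
  (∀ i j, 0 ≤ P i j) ∧
  (∀ i, ∑ j, (P i j) ^ (2 - t) = (r i) ^ (2 - t)) ∧
  (∀ j, ∑ i, (P i j) ^ (2 - t) = (c j) ^ (2 - t))

theorem stmt13 {n : ℕ} (t : ℝ) (ht0 : 0 ≤ t) (ht1 : t < 1)
    (r c : Fin n → ℝ) (M' P : Fin n → Fin n → ℝ)
    (hPU : coPolytope t r c P)
    (hopt : ∀ Q : Fin n → Fin n → ℝ, coPolytope t r c Q →
      ∑ i, ∑ j, P i j * M' i j ≤ ∑ i, ∑ j, Q i j * M' i j)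
    (i k : Fin n) (j l : Fin n) (hik : i ≠ k) (hjl : j ≠ l)
    (h1 : 0 < M' i j) (h2 : M' i l < 0) (h3 : M' k j < 0) (h4 : M' k l < 0)
    (hPij : 0 < P i j) :
    (P k l) ^ (1 - t) ≤
      (|M' k l| / (|M' i j| + |M' i l| + |M' k j|)) *
        (max (P i j) (max (P i l) (P k j))) ^ (1 - t) := by
  obtain ⟨hPnn, hProw, hPcol⟩ := hPU
  set p : ℝ := 2 - t with hpdef
  set s : ℝ := p⁻¹ with hsdef
  have hp1 : 1 < p := by simp only [hpdef]; linarith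
  have hp0 : 0 < p := by linarith
  have hs0 : 0 < s := by positivity
  have hs1 : s < 1 := by
    rw [hsdef]
    exact inv_lt_one_of_one_lt₀ hp1
  have hsp : s * p = 1 := inv_mul_cancel₀ hp0.ne'
  have round : ∀ u : ℝ, 0 ≤ u → (u ^ s) ^ p = u := by
    intro u hu
    rw [← Real.rpow_mul hu, hsp, Real.rpow_one]
  have round2 : ∀ u : ℝ, 0 ≤ u → (u ^ p) ^ s = u := by
    intro u hu
    rw [← Real.rpow_mul hu, mul_comm p s, hsp, Real.rpow_one]
  set a := P i j with hadef
  set b := P i l with hbdef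
  set cc := P k j with hccdef
  set d := P k l with hddef
  set m := max a (max b cc) with hmdef
  have hm0 : 0 < m := lt_of_lt_of_le hPij (le_max_left _ _)
  have hma : a ≤ m := le_max_left _ _
  have hmb : b ≤ m := le_trans (le_max_left b cc) (le_max_right a _)
  have hmc : cc ≤ m := le_trans (le_max_right b cc) (le_max_right a _)
  have habs1 : |M' i j| = M' i j := abs_of_pos h1
  have habs2 : |M' i l| = -(M' i l) := abs_of_neg h2
  have habs3 : |M' k j| = -(M' k j) := abs_of_neg h3
  have habs4 : |M' k l| = -(M' k l) := abs_of_neg h4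
  set S : ℝ := |M' i j| + |M' i l| + |M' k j| with hSdef
  have hS : 0 < S := by
    rw [hSdef, habs1]
    have := abs_nonneg (M' i l)
    have := abs_nonneg (M' k j)
    linarith
  -- trivial case d = 0
  rcases eq_or_lt_of_le (hPnn k l) with hd | hd
  · rw [hddef, ← hd, Real.zero_rpow (by linarith : (1 : ℝ) - t ≠ 0)]
    exact mul_nonneg (div_nonneg (abs_nonneg _) hS.le)
      (Real.rpow_nonneg hm0.le _)
  -- main case: 0 < d
  have ha0 : 0 < a := hPij
  have hb0 : 0 ≤ b := hPnn i l
  have hcc0 : 0 ≤ cc := hPnn k j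
  have hap : 0 < a ^ p := Real.rpow_pos_of_pos ha0 p
  have hdp : 0 < d ^ p := Real.rpow_pos_of_pos hd p
  have hmp : 0 < m ^ p := Real.rpow_pos_of_pos hm0 p
  have hs10 : s - 1 ≤ 0 := by linarith
  have key : ∀ δ : ℝ, 0 < δ → δ < a ^ p → δ < d ^ p →
      S * (m ^ p + δ) ^ (s - 1) ≤ |M' k l| * (d ^ p - δ) ^ (s - 1) := by
    intro δ hδ0 hδa hδd
    have hbp : (0:ℝ) ≤ b ^ p := Real.rpow_nonneg hb0 p
    have hccp : (0:ℝ) ≤ cc ^ p := Real.rpow_nonneg hcc0 p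
    have hbpδ : (0:ℝ) < b ^ p + δ := by linarith
    have hccpδ : (0:ℝ) < cc ^ p + δ := by linarith
    set Q : Fin n → Fin n → ℝ := fun x y =>
      if x = i then (if y = j then (a ^ p - δ) ^ s else if y = l then (b ^ p + δ) ^ s else P x y)
      else if x = k then
        (if y = j then (cc ^ p + δ) ^ s else if y = l then (d ^ p - δ) ^ s else P x y)
      else P x y with hQdef
    have hQii : Q i j = (a ^ p - δ) ^ s := by simp [hQdef]
    have hQil : Q i l = (b ^ p + δ) ^ s := by simp [hQdef, Ne.symm hjl]
    have hQkj : Q k j = (cc ^ p + δ) ^ s := by simp [hQdef, Ne.symm hik]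
    have hQkl : Q k l = (d ^ p - δ) ^ s := by simp [hQdef, Ne.symm hik, Ne.symm hjl]
    have hQrowother : ∀ x, x ≠ i → x ≠ k → ∀ y, Q x y = P x y := by
      intro x hxi hxk y; simp [hQdef, hxi, hxk]
    have hQcolother : ∀ y, y ≠ j → y ≠ l → ∀ x, Q x y = P x y := by
      intro y hyj hyl x
      simp only [hQdef]
      split_ifs <;> rfl
    -- pointwise power formulas
    have hrowfun_i : ∀ y, Q i y ^ p = P i y ^ p + (if y = j then -δ else if y = l then δ else 0) := by
      intro y
      by_cases hyj : y = j
      · subst hyj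
        rw [hQii, round _ (by linarith : (0:ℝ) ≤ a ^ p - δ)]
        simp [hadef]
        all_goals ring
      · by_cases hyl : y = l
        · subst hyl
          rw [hQil, round _ hbpδ.le]
          simp [hbdef, hyj]
        · rw [hQcolother y hyj hyl]
          simp [hyj, hyl]
    have hrowfun_k : ∀ y, Q k y ^ p = P k y ^ p + (if y = j then δ else if y = l then -δ else 0) := by
      intro y
      by_cases hyj : y = j
      · subst hyj
        rw [hQkj, round _ hccpδ.le]
        simp [hccdef]
      · by_cases hyl : y = l
        · subst hyl
          rw [hQkl, round _ (by linarith : (0:ℝ) ≤ d ^ p - δ)]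
          simp [hddef, hyj]
          all_goals ring
        · rw [hQcolother y hyj hyl]
          simp [hyj, hyl]
    have hcolfun_j : ∀ x, Q x j ^ p = P x j ^ p + (if x = i then -δ else if x = k then δ else 0) := by
      intro x
      by_cases hxi : x = i
      · subst hxi
        rw [hQii, round _ (by linarith : (0:ℝ) ≤ a ^ p - δ)]
        simp [hadef]
        all_goals ring
      · by_cases hxk : x = k
        · subst hxk
          rw [hQkj, round _ hccpδ.le]
          simp [hccdef, hxi]
        · rw [hQrowother x hxi hxk]
          simp [hxi, hxk]
    have hcolfun_l : ∀ x, Q x l ^ p = P x l ^ p + (if x = i then δ else if x = k then -δ else 0) := by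
      intro x
      by_cases hxi : x = i
      · subst hxi
        rw [hQil, round _ hbpδ.le]
        simp [hbdef]
      · by_cases hxk : x = k
        · subst hxk
          rw [hQkl, round _ (by linarith : (0:ℝ) ≤ d ^ p - δ)]
          simp [hddef, hxi]
          all_goals ring
        · rw [hQrowother x hxi hxk]
          simp [hxi, hxk]
    have hQU : coPolytope t r c Q := by
      refine ⟨?_, ?_, ?_⟩
      · intro x y
        simp only [hQdef]
        split_ifs
        · exact Real.rpow_nonneg (by linarith) s
        · exact Real.rpow_nonneg hbpδ.le s
        · exact hPnn x y
        · exact Real.rpow_nonneg hccpδ.le s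
        · exact Real.rpow_nonneg (by linarith) s
        · exact hPnn x y
        · exact hPnn x y
      · intro x
        show ∑ y, (Q x y) ^ p = (r x) ^ p
        rw [← hProw x]
        by_cases hxi : x = i
        · subst hxi
          rw [Finset.sum_congr rfl (fun y _ => hrowfun_i y), Finset.sum_add_distrib,
            sum_two_ite hjl]
          ring
        · by_cases hxk : x = k
          · subst hxk
            rw [Finset.sum_congr rfl (fun y _ => hrowfun_k y), Finset.sum_add_distrib,
              sum_two_ite hjl]
            ring
          · exact Finset.sum_congr rfl (fun y _ => by rw [hQrowother x hxi hxk])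
      · intro y
        show ∑ x, (Q x y) ^ p = (c y) ^ p
        rw [← hPcol y]
        by_cases hyj : y = j
        · subst hyj
          rw [Finset.sum_congr rfl (fun x _ => hcolfun_j x), Finset.sum_add_distrib,
            sum_two_ite hik]
          ring
        · by_cases hyl : y = l
          · subst hyl
            rw [Finset.sum_congr rfl (fun x _ => hcolfun_l x), Finset.sum_add_distrib,
              sum_two_ite hik]
            ring
          · exact Finset.sum_congr rfl (fun x _ => by rw [hQcolother y hyj hyl])
    have hle := hopt Q hQU
    -- compute the difference of objectives
    have hdiff : ∑ x, ∑ y, Q x y * M' x y - ∑ x, ∑ y, P x y * M' x y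
        = ((a ^ p - δ) ^ s - a) * M' i j + ((b ^ p + δ) ^ s - b) * M' i l
          + ((cc ^ p + δ) ^ s - cc) * M' k j + ((d ^ p - δ) ^ s - d) * M' k l := by
      rw [← Finset.sum_sub_distrib]
      have inner : ∀ x, (∑ y, Q x y * M' x y) - (∑ y, P x y * M' x y)
          = ∑ y, (Q x y - P x y) * M' x y := by
        intro x
        rw [← Finset.sum_sub_distrib]
        exact Finset.sum_congr rfl (fun y _ => by ring)
      have houter : ∑ x, ∑ y, (Q x y - P x y) * M' x y
          = (∑ y, (Q i y - P i y) * M' i y) + (∑ y, (Q k y - P k y) * M' k y) :=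
        sum_pair_of_eq_zero hik (by
          intro x hxi hxk
          exact Finset.sum_eq_zero (fun y _ => by rw [hQrowother x hxi hxk]; ring))
      have hin_i : ∑ y, (Q i y - P i y) * M' i y
          = (Q i j - P i j) * M' i j + (Q i l - P i l) * M' i l :=
        sum_pair_of_eq_zero hjl (by
          intro y hyj hyl
          rw [hQcolother y hyj hyl]; ring)
      have hin_k : ∑ y, (Q k y - P k y) * M' k y
          = (Q k j - P k j) * M' k j + (Q k l - P k l) * M' k l :=
        sum_pair_of_eq_zero hjl (by
          intro y hyj hyl
          rw [hQcolother y hyj hyl]; ring)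
      rw [Finset.sum_congr rfl (fun x _ => inner x), houter, hin_i, hin_k,
        hQii, hQil, hQkj, hQkl, ← hadef, ← hbdef, ← hccdef, ← hddef]
      ring
    have hΔ : (0:ℝ) ≤ ((a ^ p - δ) ^ s - a) * M' i j + ((b ^ p + δ) ^ s - b) * M' i l
          + ((cc ^ p + δ) ^ s - cc) * M' k j + ((d ^ p - δ) ^ s - d) * M' k l := by
      rw [← hdiff]; linarith
    -- concavity bounds
    have hA : δ * s * (a ^ p) ^ (s - 1) ≤ a - (a ^ p - δ) ^ s := by
      have h := rpow_lower hs0.le hs1.le hap hδ0.le hδa.le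
      rwa [round2 a ha0.le] at h
    have hB : δ * s * (b ^ p + δ) ^ (s - 1) ≤ (b ^ p + δ) ^ s - b := by
      have h := rpow_lower hs0.le hs1.le hbpδ hδ0.le (by linarith : δ ≤ b ^ p + δ)
      rwa [show b ^ p + δ - δ = b ^ p by ring, round2 b hb0] at h
    have hC : δ * s * (cc ^ p + δ) ^ (s - 1) ≤ (cc ^ p + δ) ^ s - cc := by
      have h := rpow_lower hs0.le hs1.le hccpδ hδ0.le (by linarith : δ ≤ cc ^ p + δ)
      rwa [show cc ^ p + δ - δ = cc ^ p by ring, round2 cc hcc0] at h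
    have hD : d - (d ^ p - δ) ^ s ≤ δ * s * (d ^ p - δ) ^ (s - 1) := by
      have h := rpow_upper hs0.le hs1.le (show (0:ℝ) < d ^ p - δ by linarith) hδ0.le
      rwa [show d ^ p - δ + δ = d ^ p by ring, round2 d hd.le] at h
    -- monotonicity bounds
    have hmpδ : (0:ℝ) < m ^ p + δ := by linarith
    have hMa : (m ^ p + δ) ^ (s - 1) ≤ (a ^ p) ^ (s - 1) := by
      apply Real.rpow_le_rpow_of_nonpos hap _ hs10
      have := Real.rpow_le_rpow ha0.le hma hp0.le
      linarith
    have hMb : (m ^ p + δ) ^ (s - 1) ≤ (b ^ p + δ) ^ (s - 1) := by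
      apply Real.rpow_le_rpow_of_nonpos hbpδ _ hs10
      have := Real.rpow_le_rpow hb0 hmb hp0.le
      linarith
    have hMc : (m ^ p + δ) ^ (s - 1) ≤ (cc ^ p + δ) ^ (s - 1) := by
      apply Real.rpow_le_rpow_of_nonpos hccpδ _ hs10
      have := Real.rpow_le_rpow hcc0 hmc hp0.le
      linarith
    have hδs : (0:ℝ) < δ * s := mul_pos hδ0 hs0
    have c1 : δ * s * (m ^ p + δ) ^ (s - 1) * M' i j ≤ (a - (a ^ p - δ) ^ s) * M' i j :=
      mul_le_mul_of_nonneg_right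
        (le_trans (mul_le_mul_of_nonneg_left hMa hδs.le) hA) h1.le
    have c2 : δ * s * (m ^ p + δ) ^ (s - 1) * (-M' i l) ≤ ((b ^ p + δ) ^ s - b) * (-M' i l) :=
      mul_le_mul_of_nonneg_right
        (le_trans (mul_le_mul_of_nonneg_left hMb hδs.le) hB) (by linarith)
    have c3 : δ * s * (m ^ p + δ) ^ (s - 1) * (-M' k j) ≤ ((cc ^ p + δ) ^ s - cc) * (-M' k j) :=
      mul_le_mul_of_nonneg_right
        (le_trans (mul_le_mul_of_nonneg_left hMc hδs.le) hC) (by linarith)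
    have c4 : (d - (d ^ p - δ) ^ s) * (-M' k l) ≤ δ * s * (d ^ p - δ) ^ (s - 1) * (-M' k l) :=
      mul_le_mul_of_nonneg_right hD (by linarith)
    have hbig : δ * s * (S * (m ^ p + δ) ^ (s - 1)) ≤ δ * s * (|M' k l| * (d ^ p - δ) ^ (s - 1)) := by
      rw [hSdef, habs1, habs2, habs3, habs4]
      linarith [c1, c2, c3, c4, hΔ]
    exact le_of_mul_le_mul_left hbig hδs
  -- take the limit δ → 0⁺
  have hδ0pos : (0:ℝ) < min (a ^ p) (d ^ p) := lt_min hap hdp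
  have hev : ∀ᶠ δ in 𝓝[>] (0:ℝ),
      S * (m ^ p + δ) ^ (s - 1) ≤ |M' k l| * (d ^ p - δ) ^ (s - 1) := by
    filter_upwards [Ioo_mem_nhdsGT_of_mem (Set.left_mem_Ico.mpr hδ0pos)] with δ hδ
    exact key δ hδ.1 (lt_of_lt_of_le hδ.2 (min_le_left _ _))
      (lt_of_lt_of_le hδ.2 (min_le_right _ _))
  have hT1 : Tendsto (fun δ : ℝ => S * (m ^ p + δ) ^ (s - 1)) (𝓝[>] 0)
      (𝓝 (S * (m ^ p + 0) ^ (s - 1))) := by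
    apply Tendsto.mono_left _ nhdsWithin_le_nhds
    exact (continuousAt_const.mul (((continuousAt_const.add continuousAt_id).rpow_const
      (Or.inl (by simp; linarith))))).tendsto
  have hT2 : Tendsto (fun δ : ℝ => |M' k l| * (d ^ p - δ) ^ (s - 1)) (𝓝[>] 0)
      (𝓝 (|M' k l| * (d ^ p - 0) ^ (s - 1))) := by
    apply Tendsto.mono_left _ nhdsWithin_le_nhds
    exact (continuousAt_const.mul (((continuousAt_const.sub continuousAt_id).rpow_const
      (Or.inl (by simp; linarith))))).tendsto
  have hlim : S * (m ^ p) ^ (s - 1) ≤ |M' k l| * (d ^ p) ^ (s - 1) := by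
    have h := le_of_tendsto_of_tendsto hT1 hT2 hev
    simpa using h
  -- finish the algebra
  have hmexp : (m ^ p) ^ (s - 1) = (m ^ (1 - t))⁻¹ := by
    rw [← Real.rpow_mul hm0.le, ← Real.rpow_neg hm0.le]
    congr 1
    rw [hpdef, hsdef, hpdef]
    rw [mul_sub, mul_inv_cancel₀ (by linarith : (2:ℝ) - t ≠ 0)]
    ring
  have hdexp : (d ^ p) ^ (s - 1) = (d ^ (1 - t))⁻¹ := by
    rw [← Real.rpow_mul hd.le, ← Real.rpow_neg hd.le]
    congr 1
    rw [hpdef, hsdef, hpdef]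
    rw [mul_sub, mul_inv_cancel₀ (by linarith : (2:ℝ) - t ≠ 0)]
    ring
  rw [hmexp, hdexp] at hlim
  have hu : 0 < m ^ (1 - t) := Real.rpow_pos_of_pos hm0 _
  have hv : 0 < d ^ (1 - t) := Real.rpow_pos_of_pos hd _
  have hcross : S * d ^ (1 - t) ≤ |M' k l| * m ^ (1 - t) := by
    rw [← div_le_div_iff₀ hu hv] at *
    · calc S / m ^ (1 - t) = S * (m ^ (1 - t))⁻¹ := by ring
      _ ≤ |M' k l| * (d ^ (1 - t))⁻¹ := hlim
      _ = |M' k l| / d ^ (1 - t) := by ring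
  rw [div_mul_eq_mul_div, le_div_iff₀ hS]
  linarith
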